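/- arXiv:1506.01762 — 10 statements merged into one kernel-verified Lean document; each statement's English description precedes it below -/
import Mathlib

section
/- Let [a̲,ā], [b̲,b̄], [d̲,d̄] be nonempty bounded real intervals, and define ExtDiv([a̲,ā],[b̲,b̄],[d̲,d̄]) by cases: (1) if 0 ∉ [b̲,b̄], it is the intersection of [d̲,d̄] with the interval whose endpoints are the minimum and maximum of the four endpoint quotients a̲/b̲, a̲/b̄, ā/b̲, ā/b̄; (2) if a̲ > 0 and 0 ∈ [b̲,b̄], it is the interval hull of [d̲,d̄] \ {x | a̲/b̲ < x < a̲/b̄}, where a̲/b̲ is interpreted as −∞ when b̲ = 0 and a̲/b̄ as +∞ when b̄ = 0; (3) if ā < 0 and 0 ∈ [b̲,b̄], it is the interval hull of [d̲,d̄] \ {x | ā/b̄ < x < ā/b̲}, where ā/b̄ is interpreted as −∞ when b̄ = 0 and ā/b̲ as +∞ when b̲ = 0; (4) if 0 ∈ [a̲,ā] and 0 ∈ [b̲,b̄], it is [d̲,d̄]. Then the solution set {x ∈ [d̲,d̄] | ∃α ∈ [a̲,ā], ∃β ∈ [b̲,b̄], α = β·x} is contained in ExtDiv([a̲,ā],[b̲,b̄],[d̲,d̄]).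 -/
open Classical

/-- The interval hull of a set of reals: `[inf S, sup S]`, empty if `S` is empty. -/
noncomputable def intervalHull (S : Set ℝ) : Set ℝ :=
  if S = ∅ then ∅ else Set.Icc (sInf S) (sSup S)

/-- The extended interval division operator.
In cases (2) and (3), a quotient `c / 0` is interpreted as `-∞` or `+∞` as
appropriate, which is encoded by dropping the corresponding strict inequality
when the denominator endpoint is zero. -/
noncomputable def ExtDiv (al au bl bu dl du : ℝ) : Set ℝ :=
  if (0 : ℝ) ∉ Set.Icc bl bu then
    -- case (1): ordinary interval division intersected with the domain
    Set.Icc dl du ∩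
      Set.Icc
        (min (min (al / bl) (al / bu)) (min (au / bl) (au / bu)))
        (max (max (al / bl) (al / bu)) (max (au / bl) (au / bu)))
  else if 0 < al then
    -- case (2): the gap is (al/bl, al/bu), with al/bl = -∞ if bl = 0 and
    -- al/bu = +∞ if bu = 0
    intervalHull (Set.Icc dl du \
      {x : ℝ | (bl = 0 ∨ al / bl < x) ∧ (bu = 0 ∨ x < al / bu)})
  else if au < 0 then
    -- case (3): the gap is (au/bu, au/bl), with au/bu = -∞ if bu = 0 and
    -- au/bl = +∞ if bl = 0
    intervalHull (Set.Icc dl du \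
      {x : ℝ | (bu = 0 ∨ au / bu < x) ∧ (bl = 0 ∨ x < au / bl)})
  else
    -- case (4): 0 ∈ [al, au] and 0 ∈ [bl, bu]
    Set.Icc dl du

/-!
If `α = β * x` with `α ∈ [al, au]`, `β ∈ [bl, bu]`, then, as soon as `β ≠ 0`, `x = α / β`.
When `0 ∉ [bl, bu]` the quotient `α / β` is monotone in each argument on the box, so it lies
between the extreme corner quotients. When `0 < al`, the sign of `β` decides on which side of the
gap `(al / bl, al / bu)` the point `x` falls; the case `au < 0` is the same one after negating
`α` and `β`. The remaining case imposes no constraint beyond `x ∈ [dl, du]`.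
-/

open Set

section LinearOrderedField

variable {𝕜 : Type*} [Field 𝕜] [LinearOrder 𝕜] [IsStrictOrderedRing 𝕜]

lemma inv_mem_uIcc_of_mem_Icc {p q t : 𝕜} (h0 : (0 : 𝕜) ∉ Icc p q) (ht : t ∈ Icc p q) :
    t⁻¹ ∈ uIcc p⁻¹ q⁻¹ := by
  rw [mem_Icc, not_and_or, not_le, not_le] at h0
  rcases h0 with hp | hq
  · exact mem_uIcc.2 <| .inr ⟨inv_anti₀ (hp.trans_le ht.1) ht.2, inv_anti₀ hp ht.1⟩
  · have ht0 : t < 0 := ht.2.trans_lt hq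
    exact mem_uIcc.2 <| .inr ⟨(inv_le_inv_of_neg hq ht0).2 ht.2,
      (inv_le_inv_of_neg ht0 (ht.1.trans_lt ht0)).2 ht.1⟩

lemma div_mem_uIcc_of_mem_Icc (c : 𝕜) {p q t : 𝕜} (h0 : (0 : 𝕜) ∉ Icc p q) (ht : t ∈ Icc p q) :
    c / t ∈ uIcc (c / p) (c / q) := by
  simp only [div_eq_mul_inv, ← image_const_mul_uIcc]
  exact mem_image_of_mem _ (inv_mem_uIcc_of_mem_Icc h0 ht)

lemma div_mem_Icc_min_max {al au bl bu α β : 𝕜} (h0 : (0 : 𝕜) ∉ Icc bl bu)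
    (hα : α ∈ Icc al au) (hβ : β ∈ Icc bl bu) :
    α / β ∈ Icc (min (min (al / bl) (al / bu)) (min (au / bl) (au / bu)))
      (max (max (al / bl) (al / bu)) (max (au / bl) (au / bu))) := by
  have hquot : α / β ∈ uIcc (al / β) (au / β) := by
    rw [← image_div_const_uIcc]
    exact mem_image_of_mem _ (Icc_subset_uIcc hα)
  have hl := div_mem_uIcc_of_mem_Icc al h0 hβ
  have hu := div_mem_uIcc_of_mem_Icc au h0 hβ
  exact ⟨(min_le_min hl.1 hu.1).trans hquot.1, hquot.2.trans (max_le_max hl.2 hu.2)⟩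

lemma notMem_gap_of_pos {a bl bu β x : 𝕜} (ha : 0 < a) (hβx : a ≤ β * x)
    (hβ : β ∈ Icc bl bu) : ¬((bl = 0 ∨ a / bl < x) ∧ (bu = 0 ∨ x < a / bu)) := by
  rintro ⟨hlow, hup⟩
  rcases lt_trichotomy β 0 with hneg | rfl | hpos
  · have hbl : bl < 0 := hβ.1.trans_lt hneg
    have hx : x ≤ a / bl := (le_div_iff_of_neg hbl).2 (by nlinarith [hβ.1])
    exact hlow.elim hbl.ne (not_lt.2 hx)
  · exact ha.not_ge (hβx.trans_eq (zero_mul x))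
  · have hbu : 0 < bu := hpos.trans_le hβ.2
    have hx : a / bu ≤ x := (div_le_iff₀ hbu).2 (by nlinarith [hβ.2])
    exact hup.elim hbu.ne' (not_lt.2 hx)

end LinearOrderedField

lemma mem_intervalHull {S : Set ℝ} {x a b : ℝ} (hx : x ∈ S) (hS : S ⊆ Icc a b) :
    x ∈ intervalHull S := by
  rw [intervalHull, if_neg (nonempty_of_mem hx).ne_empty]
  exact ⟨csInf_le (bddBelow_Icc.mono hS) hx, le_csSup (bddAbove_Icc.mono hS) hx⟩

theorem extDiv_sound_general (al au bl bu dl du : ℝ) :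
    {x : ℝ | x ∈ Set.Icc dl du ∧
        ∃ α ∈ Set.Icc al au, ∃ β ∈ Set.Icc bl bu, α = β * x} ⊆
      ExtDiv al au bl bu dl du := by
  rintro x ⟨hxd, _, hα, β, hβ, rfl⟩
  unfold ExtDiv
  split_ifs with hb0 hal hau
  · exact mem_intervalHull ⟨hxd, notMem_gap_of_pos hal hα.1 hβ⟩ sdiff_subset
  · have hgap := notMem_gap_of_pos (neg_pos.2 hau) (neg_mul β x ▸ neg_le_neg hα.2)
      (⟨neg_le_neg hβ.2, neg_le_neg hβ.1⟩ : -β ∈ Icc (-bu) (-bl))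
    simp only [neg_eq_zero, neg_div_neg_eq] at hgap
    exact mem_intervalHull ⟨hxd, hgap⟩ sdiff_subset
  · exact hxd
  · have hβ0 : β ≠ 0 := fun h => hb0 (h ▸ hβ)
    exact ⟨hxd, mul_div_cancel_left₀ x hβ0 ▸ div_mem_Icc_min_max hb0 hα hβ⟩

/-- Soundness of extended interval division: every `x` in the domain interval
for which `α = β·x` is solvable with `α` in the numerator interval and `β` in
the denominator interval belongs to `ExtDiv`. -/
theorem extDiv_sound (al au bl bu dl du : ℝ)
    (ha : al ≤ au) (hb : bl ≤ bu) (hd : dl ≤ du) :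
    {x : ℝ | x ∈ Set.Icc dl du ∧
        ∃ α ∈ Set.Icc al au, ∃ β ∈ Set.Icc bl bu, α = β * x} ⊆
      ExtDiv al au bl bu dl du :=
  extDiv_sound_general al au bl bu dl du
end

section
/- Let [a̲,ā] and [b̲,b̄] be nonempty bounded real intervals with a̲ > 0 and b̲ < 0 < b̄. If x ∈ ℝ, α ∈ [a̲,ā], and β ∈ [b̲,b̄] satisfy α = β·x, then x ≤ a̲/b̲ or x ≥ a̲/b̄. -/
/-- Second case of extended interval division: when the numerator interval
`[al, au]` is strictly positive and the denominator interval `[bl, bu]`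
straddles zero, solutions `x` of `α = β·x` avoid the open gap `(al/bl, al/bu)`. -/
theorem extDiv_pos_case (al au bl bu x α β : ℝ)
    (ha : al ≤ au) (hal : 0 < al) (hbl : bl < 0) (hbu : 0 < bu)
    (hα : α ∈ Set.Icc al au) (hβ : β ∈ Set.Icc bl bu)
    (heq : α = β * x) :
    x ≤ al / bl ∨ al / bu ≤ x := by
  obtain ⟨hα1, hα2⟩ := hα
  obtain ⟨hβ1, hβ2⟩ := hβ
  rcases lt_trichotomy β 0 with hb | hb | hb
  · left
    rw [le_div_iff_of_neg hbl]
    have hx : x < 0 := by nlinarith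
    nlinarith
  · exfalso; rw [hb, zero_mul] at heq; linarith
  · right
    rw [div_le_iff₀ hbu]
    have hx : 0 < x := by nlinarith
    nlinarith
end

section
/- Let [a̲,ā] and [b̲,b̄] be nonempty bounded real intervals with ā < 0 and b̲ < 0 < b̄. If x ∈ ℝ, α ∈ [a̲,ā], and β ∈ [b̲,b̄] satisfy α = β·x, then x ≤ ā/b̄ or x ≥ ā/b̲. -/
/-- Third case of extended interval division: when the numerator interval
`[al, au]` is strictly negative and the denominator interval `[bl, bu]`
straddles zero, solutions `x` of `α = β·x` avoid the open gap `(au/bu, au/bl)`. -/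
theorem extDiv_neg_case (al au bl bu x α β : ℝ)
    (ha : al ≤ au) (hau : au < 0) (hbl : bl < 0) (hbu : 0 < bu)
    (hα : α ∈ Set.Icc al au) (hβ : β ∈ Set.Icc bl bu)
    (heq : α = β * x) :
    x ≤ au / bu ∨ au / bl ≤ x := by
  obtain ⟨hα1, hα2⟩ := hα
  obtain ⟨hβ1, hβ2⟩ := hβ
  rcases lt_trichotomy β 0 with h | h | h
  · right
    rw [div_le_iff_of_neg hbl]
    have hx : 0 < x := by nlinarith
    nlinarith
  · exfalso; rw [h, zero_mul] at heq; linarith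
  · left
    rw [le_div_iff₀ hbu]
    have hx : x < 0 := by nlinarith
    nlinarith
end

section
/- Let f : ℝ → ℝ be differentiable on the interval [a̲,ā], let [D̲,D̄] be an interval with 0 ∉ [D̲,D̄] such that f′(x) ∈ [D̲,D̄] for all x ∈ [a̲,ā], and let â ∈ [a̲,ā]. If x* ∈ [a̲,ā] satisfies f(x*) = 0, then x* belongs to the set {â − f(â)/d | d ∈ [D̲,D̄]}. In particular, x* lies in the intersection of [a̲,ā] with the interval Newton image {â − f(â)/d | d ∈ [D̲,D̄]}. -/
/-!
If `x*` is a root and `x* ≠ â`, the mean value theorem gives a point `c ∈ [a̲, ā]` with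
`f′(c) = (f(â) − f(x*)) / (â − x*) = f(â) / (â − x*)`. Taking `d = f′(c) ∈ [D̲, D̄]`, which is
nonzero, the Newton step `â − f(â)/d` is exactly `x*`.
-/

open Set

theorem exists_mem_Icc_deriv_eq_slope {f f' : ℝ → ℝ} {a b x y : ℝ}
    (hf : ∀ z ∈ Icc a b, HasDerivWithinAt f (f' z) (Icc a b) z)
    (hx : x ∈ Icc a b) (hy : y ∈ Icc a b) (hxy : x < y) :
    ∃ c ∈ Icc a b, f' c = slope f x y := by
  have hcont : ContinuousOn f (Icc x y) := fun z hz =>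
    (hf z (Icc_subset_Icc hx.1 hy.2 hz)).continuousWithinAt.mono (Icc_subset_Icc hx.1 hy.2)
  have hderiv : ∀ z ∈ Ioo x y, HasDerivAt f (f' z) z := fun z hz =>
    have hz' : z ∈ Ioo a b := Ioo_subset_Ioo hx.1 hy.2 hz
    (hf z (Ioo_subset_Icc_self hz')).hasDerivAt (Icc_mem_nhds hz'.1 hz'.2)
  obtain ⟨c, hc, hslope⟩ := exists_hasDerivAt_eq_slope f f' hxy hcont hderiv
  exact ⟨c, Icc_subset_Icc hx.1 hy.2 (Ioo_subset_Icc_self hc),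
    hslope.trans (slope_def_field f x y).symm⟩

theorem exists_mem_Icc_deriv_eq_slope_of_ne {f f' : ℝ → ℝ} {a b x y : ℝ}
    (hf : ∀ z ∈ Icc a b, HasDerivWithinAt f (f' z) (Icc a b) z)
    (hx : x ∈ Icc a b) (hy : y ∈ Icc a b) (hxy : x ≠ y) :
    ∃ c ∈ Icc a b, f' c = slope f x y := by
  rcases hxy.lt_or_gt with hlt | hgt
  · exact exists_mem_Icc_deriv_eq_slope hf hx hy hlt
  · rw [slope_comm]
    exact exists_mem_Icc_deriv_eq_slope hf hy hx hgt

theorem sub_div_slope_eq_of_apply_eq_zero {f : ℝ → ℝ} {x y : ℝ} (hx : f x = 0)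
    (hslope : slope f x y ≠ 0) : y - f y / slope f x y = x := by
  rw [slope_def_field, hx, sub_zero] at hslope ⊢
  have hfy : f y ≠ 0 := fun h => hslope (by simp [h])
  rw [div_div_cancel₀ hfy, sub_sub_cancel]

/-- The interval Newton operator never loses a root: if `f` is differentiable
on `[al, au]` with derivative values enclosed in `[Dl, Du]` (an interval not
containing zero), `ahat ∈ [al, au]`, and `x* ∈ [al, au]` is a root of `f`, then
`x*` belongs to the Newton image `{ahat − f(ahat)/d | d ∈ [Dl, Du]}`, hence to its
intersection with `[al, au]`. -/
theorem interval_newton_keeps_roots (f f' : ℝ → ℝ) (al au Dl Du ahat xs : ℝ)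
    (hdf : ∀ x ∈ Set.Icc al au, HasDerivWithinAt f (f' x) (Set.Icc al au) x)
    (hD0 : (0 : ℝ) ∉ Set.Icc Dl Du)
    (hD : ∀ x ∈ Set.Icc al au, f' x ∈ Set.Icc Dl Du)
    (hahat : ahat ∈ Set.Icc al au)
    (hxs : xs ∈ Set.Icc al au) (hroot : f xs = 0) :
    xs ∈ {y : ℝ | ∃ d ∈ Set.Icc Dl Du, y = ahat - f ahat / d} ∧
      xs ∈ Set.Icc al au ∩ {y : ℝ | ∃ d ∈ Set.Icc Dl Du, y = ahat - f ahat / d} := by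
  have hnewton : ∃ d ∈ Icc Dl Du, xs = ahat - f ahat / d := by
    rcases eq_or_ne xs ahat with rfl | hne
    · exact ⟨f' xs, hD xs hxs, by simp [hroot]⟩
    · obtain ⟨c, hc, hslope⟩ := exists_mem_Icc_deriv_eq_slope_of_ne hdf hxs hahat hne
      have hd : slope f xs ahat ∈ Icc Dl Du := hslope ▸ hD c hc
      exact ⟨_, hd, (sub_div_slope_eq_of_apply_eq_zero hroot (ne_of_mem_of_not_mem hd hD0)).symm⟩
  exact ⟨hnewton, hxs, hnewton⟩
end

section
/- Let f : ℝ → ℝ be differentiable on the interval [a̲,ā], let [D̲,D̄] be an interval with 0 ∉ [D̲,D̄] such that f′(x) ∈ [D̲,D̄] for all x ∈ [a̲,ā], and let â ∈ [a̲,ā]. If the intersection of [a̲,ā] with the set {â − f(â)/d | d ∈ [D̲,D̄]} is empty, then f has no zero in [a̲,ā]. -/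
/-! If `f x = 0` for some `x ∈ [al, au]`, the mean value theorem gives `c` in the interval with
`f ahat = f' c * (ahat - x)`, so the Newton point `ahat - f ahat / f' c` is `x` itself, or `ahat`
when `f' c = 0`; either way it lies in the intersection, which is therefore nonempty. -/

open Set

section MeanValue

variable {f f' : ℝ → ℝ} {s : Set ℝ}

theorem Set.OrdConnected.exists_sub_eq_mul_sub_of_lt (hs : s.OrdConnected)
    (hf : ∀ x ∈ s, HasDerivWithinAt f (f' x) s x) {x y : ℝ} (hx : x ∈ s) (hy : y ∈ s)
    (hxy : x < y) : ∃ c ∈ s, f y - f x = f' c * (y - x) := by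
  have hsub : Icc x y ⊆ s := hs.out hx hy
  have hcont : ContinuousOn f (Icc x y) := fun z hz =>
    (hf z (hsub hz)).continuousWithinAt.mono hsub
  have hderiv : ∀ z ∈ Ioo x y, HasDerivAt f (f' z) z := fun z hz =>
    (hf z (hsub (Ioo_subset_Icc_self hz))).hasDerivAt
      (Filter.mem_of_superset (Icc_mem_nhds hz.1 hz.2) hsub)
  obtain ⟨c, hc, hslope⟩ := exists_hasDerivAt_eq_slope f f' hxy hcont hderiv
  exact ⟨c, hsub (Ioo_subset_Icc_self hc), by rw [hslope, div_mul_cancel₀ _ (sub_ne_zero.2 hxy.ne')]⟩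

theorem Set.OrdConnected.exists_sub_eq_mul_sub (hs : s.OrdConnected)
    (hf : ∀ x ∈ s, HasDerivWithinAt f (f' x) s x) {x y : ℝ} (hx : x ∈ s) (hy : y ∈ s) :
    ∃ c ∈ s, f y - f x = f' c * (y - x) := by
  rcases lt_trichotomy x y with hxy | rfl | hyx
  · exact hs.exists_sub_eq_mul_sub_of_lt hf hx hy hxy
  · exact ⟨x, hx, by ring⟩
  · obtain ⟨c, hc, h⟩ := hs.exists_sub_eq_mul_sub_of_lt hf hy hx hyx
    exact ⟨c, hc, by linarith⟩

end MeanValue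

/-- When `d = 0` the Newton step is `a - v / 0 = a` (junk division), otherwise it lands on `x`. -/
theorem newton_step_mem {s : Set ℝ} {a x d v : ℝ} (ha : a ∈ s) (hx : x ∈ s)
    (hv : v = d * (a - x)) : a - v / d ∈ s := by
  rcases eq_or_ne d 0 with rfl | hd
  · simpa using ha
  · rwa [hv, mul_div_cancel_left₀ _ hd, sub_sub_cancel]

theorem interval_newton_empty_no_root_general (f f' : ℝ → ℝ) (al au Dl Du ahat : ℝ)
    (hdf : ∀ x ∈ Set.Icc al au, HasDerivWithinAt f (f' x) (Set.Icc al au) x)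
    (hD : ∀ x ∈ Set.Icc al au, f' x ∈ Set.Icc Dl Du)
    (hahat : ahat ∈ Set.Icc al au)
    (hempty : Set.Icc al au ∩ {y : ℝ | ∃ d ∈ Set.Icc Dl Du, y = ahat - f ahat / d} = ∅) :
    ∀ x ∈ Set.Icc al au, f x ≠ 0 := by
  intro x hx hfx
  obtain ⟨c, hc, hmvt⟩ := ordConnected_Icc.exists_sub_eq_mul_sub hdf hx hahat
  have hstep : ahat - f ahat / f' c ∈ Icc al au :=
    newton_step_mem hahat hx (by rwa [hfx, sub_zero] at hmvt)
  have hmem : ahat - f ahat / f' c ∈ Icc al au ∩ {y | ∃ d ∈ Icc Dl Du, y = ahat - f ahat / d} :=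
    ⟨hstep, f' c, hD c hc, rfl⟩
  rwa [hempty] at hmem

/-- An empty interval Newton image certifies unsatisfiability: if `f` is
differentiable on `[al, au]` with derivative values enclosed in `[Dl, Du]`
(an interval not containing zero), `ahat ∈ [al, au]`, and the intersection of
`[al, au]` with the Newton image `{ahat − f(ahat)/d | d ∈ [Dl, Du]}` is empty,
then `f` has no zero in `[al, au]`. -/
theorem interval_newton_empty_no_root (f f' : ℝ → ℝ) (al au Dl Du ahat : ℝ)
    (hdf : ∀ x ∈ Set.Icc al au, HasDerivWithinAt f (f' x) (Set.Icc al au) x)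
    (hD0 : (0 : ℝ) ∉ Set.Icc Dl Du)
    (hD : ∀ x ∈ Set.Icc al au, f' x ∈ Set.Icc Dl Du)
    (hahat : ahat ∈ Set.Icc al au)
    (hempty : Set.Icc al au ∩ {y : ℝ | ∃ d ∈ Set.Icc Dl Du, y = ahat - f ahat / d} = ∅) :
    ∀ x ∈ Set.Icc al au, f x ≠ 0 :=
  interval_newton_empty_no_root_general f f' al au Dl Du ahat hdf hD hahat hempty
end

section
/- Let f : ℝ → ℝ be differentiable on the interval [a̲,ā], let [D̲,D̄] be an interval with 0 ∉ [D̲,D̄] such that f′(x) ∈ [D̲,D̄] for all x ∈ [a̲,ā], and let â ∈ [a̲,ā]. If the Newton image N = {â − f(â)/d | d ∈ [D̲,D̄]} is contained in the open interval (a̲,ā), then f has exactly one zero x* in [a̲,ā], and x* ∈ N. -/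
private lemma newton_slope_mem (f f' : ℝ → ℝ) (al au Dl Du : ℝ)
    (hdf : ∀ x ∈ Set.Icc al au, HasDerivWithinAt f (f' x) (Set.Icc al au) x)
    (hD : ∀ x ∈ Set.Icc al au, f' x ∈ Set.Icc Dl Du)
    {x y : ℝ} (hx : x ∈ Set.Icc al au) (hy : y ∈ Set.Icc al au) (hxy : x ≤ y) :
    ∃ d ∈ Set.Icc Dl Du, f y - f x = d * (y - x) := by
  rcases eq_or_lt_of_le hxy with rfl | hlt
  · exact ⟨f' x, hD x hx, by ring⟩
  have hco : ContinuousOn f (Set.Icc al au) := fun z hz => (hdf z hz).continuousWithinAt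
  have hderiv : ∀ z ∈ interior (Set.Icc al au), HasDerivAt f (f' z) z := by
    intro z hz
    rw [interior_Icc] at hz
    exact (hdf z (Set.Ioo_subset_Icc_self hz)).hasDerivAt (Icc_mem_nhds hz.1 hz.2)
  have hdiff : DifferentiableOn ℝ f (interior (Set.Icc al au)) :=
    fun z hz => (hderiv z hz).differentiableAt.differentiableWithinAt
  have hlow : Dl * (y - x) ≤ f y - f x := by
    apply (convex_Icc al au).mul_sub_le_image_sub_of_le_deriv hco hdiff ?_ x hx y hy hxy
    intro z hz
    rw [(hderiv z hz).deriv]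
    rw [interior_Icc] at hz
    exact (hD z (Set.Ioo_subset_Icc_self hz)).1
  have hup : f y - f x ≤ Du * (y - x) := by
    apply (convex_Icc al au).image_sub_le_mul_sub_of_deriv_le hco hdiff ?_ x hx y hy hxy
    intro z hz
    rw [(hderiv z hz).deriv]
    rw [interior_Icc] at hz
    exact (hD z (Set.Ioo_subset_Icc_self hz)).2
  refine ⟨(f y - f x) / (y - x), ⟨?_, ?_⟩, (div_mul_cancel₀ _ (by linarith : y - x ≠ 0)).symm⟩
  · rw [le_div_iff₀ (by linarith)]; linarith
  · rw [div_le_iff₀ (by linarith)]; linarith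

private lemma newton_aux (f f' : ℝ → ℝ) (al au Dl Du ahat : ℝ)
    (hdf : ∀ x ∈ Set.Icc al au, HasDerivWithinAt f (f' x) (Set.Icc al au) x)
    (hDl : 0 < Dl)
    (hD : ∀ x ∈ Set.Icc al au, f' x ∈ Set.Icc Dl Du)
    (hahat : ahat ∈ Set.Icc al au)
    (hN : {y : ℝ | ∃ d ∈ Set.Icc Dl Du, y = ahat - f ahat / d} ⊆ Set.Ioo al au) :
    ∃ xs, xs ∈ Set.Icc al au ∧ f xs = 0 ∧
      xs ∈ {y : ℝ | ∃ d ∈ Set.Icc Dl Du, y = ahat - f ahat / d} ∧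
      ∀ y ∈ Set.Icc al au, f y = 0 → y = xs := by
  have hal : al ∈ Set.Icc al au := ⟨le_refl _, hahat.1.trans hahat.2⟩
  have hau : au ∈ Set.Icc al au := ⟨hahat.1.trans hahat.2, le_refl _⟩
  -- f al < 0
  obtain ⟨d1, hd1, he1⟩ := newton_slope_mem f f' al au Dl Du hdf hD hal hahat hahat.1
  have hd1pos : 0 < d1 := hDl.trans_le hd1.1
  have h1 : al < ahat - f ahat / d1 := (hN ⟨d1, hd1, rfl⟩).1
  have hfal : f al < 0 := by
    have : f ahat / d1 < ahat - al := by linarith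
    rw [div_lt_iff₀ hd1pos] at this
    nlinarith
  -- f au > 0
  obtain ⟨d2, hd2, he2⟩ := newton_slope_mem f f' al au Dl Du hdf hD hahat hau hahat.2
  have hd2pos : 0 < d2 := hDl.trans_le hd2.1
  have h2 : ahat - f ahat / d2 < au := (hN ⟨d2, hd2, rfl⟩).2
  have hfau : 0 < f au := by
    have : ahat - au < f ahat / d2 := by linarith
    rw [lt_div_iff₀ hd2pos] at this
    nlinarith
  -- IVT
  have hco : ContinuousOn f (Set.Icc al au) := fun z hz => (hdf z hz).continuousWithinAt
  obtain ⟨xs, hxs, hfxs⟩ := intermediate_value_Icc (hahat.1.trans hahat.2) hco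
    (show (0:ℝ) ∈ Set.Icc (f al) (f au) from ⟨hfal.le, hfau.le⟩)
  refine ⟨xs, hxs, hfxs, ?_, ?_⟩
  · -- xs ∈ Newton set
    rcases le_total xs ahat with h | h
    · obtain ⟨d, hd, he⟩ := newton_slope_mem f f' al au Dl Du hdf hD hxs hahat h
      have hdpos : 0 < d := hDl.trans_le hd.1
      exact ⟨d, hd, by field_simp; nlinarith⟩
    · obtain ⟨d, hd, he⟩ := newton_slope_mem f f' al au Dl Du hdf hD hahat hxs h
      have hdpos : 0 < d := hDl.trans_le hd.1
      exact ⟨d, hd, by field_simp; nlinarith⟩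
  · -- uniqueness
    intro y hy hfy
    by_contra hne
    rcases lt_or_gt_of_ne hne with h | h
    · obtain ⟨d, hd, he⟩ := newton_slope_mem f f' al au Dl Du hdf hD hy hxs h.le
      have hdpos : 0 < d := hDl.trans_le hd.1
      nlinarith
    · obtain ⟨d, hd, he⟩ := newton_slope_mem f f' al au Dl Du hdf hD hxs hy h.le
      have hdpos : 0 < d := hDl.trans_le hd.1
      nlinarith

/-- Existence-and-uniqueness test of the interval Newton method: if `f` is
differentiable on `[al, au]` with derivative values enclosed in `[Dl, Du]`
(an interval not containing zero), `ahat ∈ [al, au]`, and the Newton image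
`N = {ahat − f(ahat)/d | d ∈ [Dl, Du]}` is contained in the open interval
`(al, au)`, then `f` has exactly one zero in `[al, au]`, and it lies in `N`. -/
theorem interval_newton_unique_root (f f' : ℝ → ℝ) (al au Dl Du ahat : ℝ)
    (hdf : ∀ x ∈ Set.Icc al au, HasDerivWithinAt f (f' x) (Set.Icc al au) x)
    (hD0 : (0 : ℝ) ∉ Set.Icc Dl Du)
    (hD : ∀ x ∈ Set.Icc al au, f' x ∈ Set.Icc Dl Du)
    (hahat : ahat ∈ Set.Icc al au)
    (hN : {y : ℝ | ∃ d ∈ Set.Icc Dl Du, y = ahat - f ahat / d} ⊆ Set.Ioo al au) :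
    ∃ xs, xs ∈ Set.Icc al au ∧ f xs = 0 ∧
      xs ∈ {y : ℝ | ∃ d ∈ Set.Icc Dl Du, y = ahat - f ahat / d} ∧
      ∀ y ∈ Set.Icc al au, f y = 0 → y = xs := by
  have hDlDu : Dl ≤ Du := (hD ahat hahat).1.trans (hD ahat hahat).2
  rw [Set.mem_Icc, not_and_or, not_le, not_le] at hD0
  rcases hD0 with hDl | hDu
  · exact newton_aux f f' al au Dl Du ahat hdf hDl hD hahat hN
  · -- negate f
    have hset : {y : ℝ | ∃ d ∈ Set.Icc (-Du) (-Dl), y = ahat - (-f ahat) / d}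
        = {y : ℝ | ∃ d ∈ Set.Icc Dl Du, y = ahat - f ahat / d} := by
      ext y
      constructor
      · rintro ⟨d, hd, rfl⟩
        exact ⟨-d, ⟨by linarith [hd.2], by linarith [hd.1]⟩, by ring⟩
      · rintro ⟨d, hd, rfl⟩
        exact ⟨-d, ⟨by linarith [hd.2], by linarith [hd.1]⟩, by ring⟩
    obtain ⟨xs, h1, h2, h3, h4⟩ := newton_aux (fun x => -f x) (fun x => -f' x) al au (-Du) (-Dl)
      ahat (fun x hx => (hdf x hx).neg) (by linarith)
      (fun x hx => ⟨neg_le_neg (hD x hx).2, neg_le_neg (hD x hx).1⟩) hahat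
      (by rw [hset]; exact hN)
    rw [hset] at h3
    exact ⟨xs, h1, by simpa using h2, h3, fun y hy hfy => h4 y hy (by simpa using hfy)⟩
end

section
/- Let h : ℝ → ℝ be differentiable on the interval [α,β], and let [D̲,D̄] be an interval such that h′(t) ∈ [D̲,D̄] for all t ∈ [α,β]. If t* ∈ [α,β] satisfies h(t*) = 0, then there exist x ∈ [0, β−α] and d ∈ [D̲,D̄] such that t* = α + x and −h(α) = d·x. -/
/-- Soundness of the lower-bound interval Newton contraction with extended
division used in `SearchZero`: every zero `ts` of `h` in `[α, β]` is of the
form `α + x` with `x ∈ [0, β − α]` and `−h(α) = d·x` for some `d` in the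
derivative enclosure `[Dl, Du]`. -/
theorem searchZero_eq_contraction_sound (h h' : ℝ → ℝ) (α β Dl Du ts : ℝ)
    (hdh : ∀ t ∈ Set.Icc α β, HasDerivWithinAt h (h' t) (Set.Icc α β) t)
    (hD : ∀ t ∈ Set.Icc α β, h' t ∈ Set.Icc Dl Du)
    (hts : ts ∈ Set.Icc α β) (hzero : h ts = 0) :
    ∃ x ∈ Set.Icc (0 : ℝ) (β - α), ∃ d ∈ Set.Icc Dl Du,
      ts = α + x ∧ -h α = d * x := by
  obtain ⟨hα, hβ⟩ := hts
  rcases eq_or_lt_of_le hα with heq | hlt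
  · refine ⟨0, ⟨le_refl _, by linarith⟩, h' ts, hD ts ⟨hα, hβ⟩, by linarith, ?_⟩
    rw [← heq] at hzero
    simp [hzero]
  · -- MVT on [α, ts]
    have hsub : Set.Icc α ts ⊆ Set.Icc α β := Set.Icc_subset_Icc le_rfl hβ
    have hcont : ContinuousOn h (Set.Icc α ts) := fun t ht =>
      ((hdh t (hsub ht)).continuousWithinAt).mono hsub
    have hderiv : ∀ t ∈ Set.Ioo α ts, HasDerivAt h (h' t) t := by
      intro t ht
      have htmem : t ∈ Set.Icc α β := hsub (Set.Ioo_subset_Icc_self ht)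
      have := (hdh t htmem)
      have hmem : Set.Icc α β ∈ nhds t := by
        apply Icc_mem_nhds
        · exact ht.1
        · exact lt_of_lt_of_le ht.2 hβ
      exact this.hasDerivAt hmem
    obtain ⟨c, hc, hceq⟩ := exists_hasDerivAt_eq_slope h h' hlt hcont hderiv
    refine ⟨ts - α, ⟨by linarith, by linarith⟩, h' c,
      hD c (hsub (Set.Ioo_subset_Icc_self hc)), by ring, ?_⟩
    rw [hceq, div_mul_cancel₀ _ (by linarith : ts - α ≠ 0), hzero]
    ring
end

section
/- Let h : ℝ → ℝ be differentiable on the interval [α,β], and let [D̲,D̄] be an interval such that h′(t) ∈ [D̲,D̄] for all t ∈ [α,β]. If t* ∈ [α,β] satisfies h(t*) < 0, then there exist x ∈ [0, β−α], d ∈ [D̲,D̄], and s ≥ 0 such that t* = α + x and −h(α) − s = d·x. -/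
/-- Soundness of the inequality-constraint contraction (with numerator
interval `−h(α) − [0, ∞)`) used in `SearchZero`: every point `ts` of `[α, β]`
where `h` is strictly negative is of the form `α + x` with `x ∈ [0, β − α]`
and `−h(α) − s = d·x` for some `d` in the derivative enclosure `[Dl, Du]`
and some `s ≥ 0`. -/
theorem searchZero_lt_contraction_sound (h h' : ℝ → ℝ) (α β Dl Du ts : ℝ)
    (hdh : ∀ t ∈ Set.Icc α β, HasDerivWithinAt h (h' t) (Set.Icc α β) t)
    (hD : ∀ t ∈ Set.Icc α β, h' t ∈ Set.Icc Dl Du)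
    (hts : ts ∈ Set.Icc α β) (hneg : h ts < 0) :
    ∃ x ∈ Set.Icc (0 : ℝ) (β - α), ∃ d ∈ Set.Icc Dl Du, ∃ s : ℝ, 0 ≤ s ∧
      ts = α + x ∧ -h α - s = d * x := by
  obtain ⟨hαts, htsβ⟩ := hts
  have hαβ : α ≤ β := le_trans hαts htsβ
  rcases eq_or_lt_of_le hαts with heq | hlt
  · refine ⟨0, ⟨le_refl 0, by linarith⟩, Dl, ⟨le_refl _, le_trans (hD α ⟨le_refl _, hαβ⟩).1
      (hD α ⟨le_refl _, hαβ⟩).2⟩, -h ts, by linarith, by linarith, by rw [← heq]; ring⟩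
  · have hcont : ContinuousOn h (Set.Icc α ts) :=
      fun t ht => ((hdh t ⟨ht.1, le_trans ht.2 htsβ⟩).continuousWithinAt).mono
        (Set.Icc_subset_Icc le_rfl htsβ)
    have hderiv : ∀ t ∈ Set.Ioo α ts, HasDerivAt h (h' t) t := fun t ht =>
      (hdh t ⟨le_of_lt ht.1, le_trans (le_of_lt ht.2) htsβ⟩).hasDerivAt
        (Icc_mem_nhds (lt_of_lt_of_le ht.1 le_rfl) (lt_of_lt_of_le ht.2 htsβ))
    obtain ⟨c, hc, hslope⟩ := exists_hasDerivAt_eq_slope h h' hlt hcont hderiv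
    refine ⟨ts - α, ⟨by linarith, by linarith⟩,
      h' c, hD c ⟨le_of_lt hc.1, le_trans (le_of_lt hc.2) htsβ⟩, -h ts, by linarith,
      by ring, ?_⟩
    have hne : ts - α ≠ 0 := sub_ne_zero_of_ne (ne_of_gt hlt)
    have : h' c * (ts - α) = h ts - h α := by
      rw [hslope, div_mul_cancel₀ _ hne]
    linarith
end

section
/- Let A, B ⊆ ℝ, let a ≤ b and c ≤ d be real numbers with [a,b) ⊆ A and [c,d) ⊆ B, let 0 ≤ u ≤ v, and assume max(a,c) < min(b,d). Then every t ∈ [max(a,c) − v, min(b,d) − u) ∩ [a,b) satisfies the until condition: there exists t′ ∈ [t+u, t+v] such that t′ ∈ B and for all t″ ∈ [t, t′], t″ ∈ A. -/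
/-- Soundness of the monitoring rule for the bounded "until" operator:
if `[a, b) ⊆ A` (times where `φ₁` holds) and `[c, d) ⊆ B` (times where `φ₂`
holds), `0 ≤ u ≤ v`, and the intersection `[max a c, min b d)` is nonempty,
then every `t ∈ [max a c − v, min b d − u) ∩ [a, b)` satisfies the until
condition: some `t' ∈ [t+u, t+v]` is in `B` and all of `[t, t']` is in `A`. -/
theorem until_monitoring_sound (A B : Set ℝ) (a b c d u v : ℝ)
    (hab : a ≤ b) (hcd : c ≤ d)
    (hA : Set.Ico a b ⊆ A) (hB : Set.Ico c d ⊆ B)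
    (hu : 0 ≤ u) (huv : u ≤ v)
    (hne : max a c < min b d) :
    ∀ t ∈ Set.Ico (max a c - v) (min b d - u) ∩ Set.Ico a b,
      ∃ t' ∈ Set.Icc (t + u) (t + v), t' ∈ B ∧ ∀ t'' ∈ Set.Icc t t', t'' ∈ A := by
  rintro t ⟨⟨h1, h2⟩, h3, h4⟩
  refine ⟨max (t + u) (max a c), ⟨le_max_left _ _, max_le (by linarith) (by linarith)⟩,
    hB ⟨le_max_of_le_right (le_max_right a c), ?_⟩, fun t'' ⟨ht1, ht2⟩ =>
    hA ⟨le_trans h3 ht1, lt_of_le_of_lt ht2 ?_⟩⟩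
  · apply max_lt <;> [skip; exact lt_of_lt_of_le hne (min_le_right _ _)]
    linarith [min_le_right b d]
  · apply max_lt <;> [skip; exact lt_of_lt_of_le hne (min_le_left _ _)]
    linarith [min_le_left b d]
end

section
/- Let a ≤ b and c ≤ d be real numbers with max(a,c) < min(b,d), and let 0 ≤ u ≤ v. Then {t ∈ ℝ | ∃t′ ∈ [t+u, t+v], t′ ∈ [c,d) and [t,t′] ⊆ [a,b)} = [max(a,c) − v, min(b,d) − u) ∩ [a,b). -/
/-- Exact characterization of the satisfaction set of the bounded until
operator when `φ₁` holds exactly on `[a, b)` and `φ₂` holds exactly on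
`[c, d)`: the until condition holds at `t` iff
`t ∈ [max a c − v, min b d − u) ∩ [a, b)`. -/
theorem until_satisfaction_set (a b c d u v : ℝ)
    (hab : a ≤ b) (hcd : c ≤ d) (hne : max a c < min b d)
    (hu : 0 ≤ u) (huv : u ≤ v) :
    {t : ℝ | ∃ t' ∈ Set.Icc (t + u) (t + v),
        t' ∈ Set.Ico c d ∧ Set.Icc t t' ⊆ Set.Ico a b} =
      Set.Ico (max a c - v) (min b d - u) ∩ Set.Ico a b := by
  ext t
  simp only [Set.mem_setOf_eq, Set.mem_inter_iff, Set.mem_Ico, Set.mem_Icc]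
  constructor
  · rintro ⟨t', ⟨h1, h2⟩, ⟨hc, hd⟩, hsub⟩
    have htt' : t ≤ t' := le_trans (by linarith) h1
    have ht : t ∈ Set.Ico a b := hsub ⟨le_refl t, htt'⟩
    have ht' : t' ∈ Set.Ico a b := hsub ⟨htt', le_refl t'⟩
    obtain ⟨ha, hb⟩ := ht
    obtain ⟨ha', hb'⟩ := ht'
    refine ⟨⟨?_, ?_⟩, ha, hb⟩
    · have : max a c ≤ t' := max_le ha' hc
      linarith
    · have : t' < min b d := lt_min hb' hd
      linarith
  · rintro ⟨⟨h1, h2⟩, ha, hb⟩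
    refine ⟨max (t + u) (max a c), ⟨le_max_left _ _, max_le (by linarith) (by linarith)⟩,
      ⟨le_trans (le_max_right a c) (le_max_right _ _), ?_⟩, ?_⟩
    · have h3 : t + u < min b d := by linarith
      have := max_lt h3 hne
      exact lt_of_lt_of_le this (min_le_right b d)
    · rintro x ⟨hx1, hx2⟩
      have h3 : t + u < min b d := by linarith
      have h4 : max (t + u) (max a c) < min b d := max_lt h3 hne
      exact ⟨le_trans ha hx1, lt_of_le_of_lt hx2 (lt_of_lt_of_le h4 (min_le_left b d))⟩
end
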